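/- Continuity of the stopped (absorbing-floor) final-position map: for φ ∈ [0, π] let τ(φ) := inf {t ≥ 0 : A φ t ∈ {0, π}} if this set is nonempty (so τ(0) = τ(π) = 0), and define, for T ≥ 0, the stopped position ĝ_T(φ) := A φ (min(T, τ(φ))) when the set is nonempty and ĝ_T(φ) := A φ T otherwise. Then for every T ≥ 0 the map ĝ_T : [0, π] → ℝ is continuous. (This is the continuity assumption of Courant and Robbins for the motion in which the rod remains on the floor once it touches it, valid for a flat floor.) -/

import Mathlib

/-- `α` is a solution of the inverted-pendulum equation
`α'' t = -g * cos (α t) + u t * sin (α t)`. -/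
def IsPendulumSolution (g : ℝ) (u : ℝ → ℝ) (α : ℝ → ℝ) : Prop :=
  ContDiff ℝ 2 α ∧
    ∀ t : ℝ, deriv (deriv α) t = -g * Real.cos (α t) + u t * Real.sin (α t)

/-!
Solutions depend Lipschitz-continuously on the initial angle, uniformly on compact time
intervals (Gronwall). If the rod started at `φ₀` stays strictly above the floor on `[0, T]`,
so do nearby rods, and near `φ₀` the stopped map is just `φ ↦ A φ T`. Otherwise the rod touches
the floor at a first time `τ₀ ≤ T` and leaves `[0, π]` right after it: it arrives with `α'`
pointing down (or zero) and there `α'' = -g` (at `α = 0`; the case `α = π` is its mirror image).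
So a nearby rod is still above the floor a little before `τ₀` and already out of `[0, π]` a
little after it; it is stopped at a time close to `τ₀`, at a position close to `A φ₀ τ₀`.
-/

open Real Set Filter Topology
open scoped NNReal

section OneSided

variable {f : ℝ → ℝ} {f' x : ℝ}

theorem HasDerivAt.eventually_nhdsGT_lt (hf : HasDerivAt f f' x) (h : f' < 0) :
    ∀ᶠ y in 𝓝[>] x, f y < f x := by
  have hslope := (hasDerivAt_iff_tendsto_slope.mp hf).mono_left (nhdsGT_le_nhdsNE x)
  filter_upwards [hslope.eventually (eventually_lt_nhds h), self_mem_nhdsWithin]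
    with y hy (hxy : x < y)
  rw [slope_def_field, div_neg_iff] at hy
  rcases hy with ⟨-, hy⟩ | ⟨hy, -⟩ <;> linarith

theorem HasDerivAt.nonpos_of_eventually_nhdsLT_le (hf : HasDerivAt f f' x)
    (h : ∀ᶠ y in 𝓝[<] x, f x ≤ f y) : f' ≤ 0 := by
  have hslope := (hasDerivAt_iff_tendsto_slope.mp hf).mono_left (nhdsLT_le_nhdsNE x)
  refine le_of_tendsto hslope ?_
  filter_upwards [h, self_mem_nhdsWithin] with y hy (hyx : y < x)
  rw [slope_def_field]
  exact div_nonpos_of_nonneg_of_nonpos (sub_nonneg.2 hy) (sub_nonpos.2 hyx.le)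

end OneSided

theorem TendstoUniformlyOn.eventually_mapsTo {ι X Y : Type*} [TopologicalSpace X]
    [PseudoMetricSpace Y] {F : ι → X → Y} {f : X → Y} {p : Filter ι} {K : Set X} {U : Set Y}
    (hF : TendstoUniformlyOn F f p K) (hK : IsCompact K) (hf : ContinuousOn f K) (hU : IsOpen U)
    (hfKU : MapsTo f K U) : ∀ᶠ i in p, MapsTo (F i) K U := by
  obtain ⟨δ, hδ, hδU⟩ :=
    (hK.image_of_continuousOn hf).exists_thickening_subset_open hU hfKU.image_subset
  filter_upwards [Metric.tendstoUniformlyOn_iff.mp hF δ hδ] with i hi x hx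
  exact hδU (Metric.mem_thickening_iff.mpr ⟨f x, mem_image_of_mem f hx, by
    rw [dist_comm]; exact hi x hx⟩)

def floorHits (α : ℝ → ℝ) : Set ℝ := {t : ℝ | 0 ≤ t ∧ (α t = 0 ∨ α t = Real.pi)}

-- `firstHit (A φ)` and `stoppedPosition (A φ) T` are `τ(φ)` and `ĝ_T(φ)` of the statement.
noncomputable def firstHit (α : ℝ → ℝ) : ℝ := sInf (floorHits α)

open Classical in
noncomputable def stoppedPosition (α : ℝ → ℝ) (T : ℝ) : ℝ :=
  if (floorHits α).Nonempty then α (min T (firstHit α)) else α T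

section FloorHits

variable {α : ℝ → ℝ} {a t T : ℝ}

theorem firstHit_le (h : t ∈ floorHits α) : firstHit α ≤ t :=
  csInf_le ⟨0, fun _ hs => hs.1⟩ h

theorem isClosed_floorHits (hc : Continuous α) : IsClosed (floorHits α) :=
  (isClosed_le continuous_const continuous_id).inter
    ((isClosed_eq hc continuous_const).union (isClosed_eq hc continuous_const))

theorem firstHit_mem (hc : Continuous α) (hne : (floorHits α).Nonempty) :
    firstHit α ∈ floorHits α :=
  (isClosed_floorHits hc).csInf_mem hne ⟨0, fun _ hs => hs.1⟩

theorem mapsTo_Ioo_of_forall_notMem_floorHits (hc : Continuous α) (h0 : α 0 ∈ Icc 0 π)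
    (h : ∀ t ∈ Icc 0 a, t ∉ floorHits α) : MapsTo α (Icc 0 a) (Ioo 0 π) := by
  intro t ht
  by_contra hout
  rw [mem_Ioo, not_and_or, not_lt, not_lt] at hout
  rcases hout with hle | hge
  · obtain ⟨r, hr, hr0⟩ := intermediate_value_Icc' ht.1 hc.continuousOn ⟨hle, h0.1⟩
    exact h r ⟨hr.1, hr.2.trans ht.2⟩ ⟨hr.1, Or.inl hr0⟩
  · obtain ⟨r, hr, hrπ⟩ := intermediate_value_Icc ht.1 hc.continuousOn ⟨h0.2, hge⟩
    exact h r ⟨hr.1, hr.2.trans ht.2⟩ ⟨hr.1, Or.inr hrπ⟩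

theorem mapsTo_Ioo_of_lt_firstHit (hc : Continuous α) (h0 : α 0 ∈ Icc 0 π)
    (ha : a < firstHit α) : MapsTo α (Icc 0 a) (Ioo 0 π) :=
  mapsTo_Ioo_of_forall_notMem_floorHits hc h0 fun _ ht hmem =>
    (ha.trans_le (firstHit_le hmem)).not_ge ht.2

theorem stoppedPosition_of_nonempty (hne : (floorHits α).Nonempty) :
    stoppedPosition α T = α (min T (firstHit α)) :=
  if_pos hne

theorem stoppedPosition_of_mapsTo (h : MapsTo α (Icc 0 T) (Ioo 0 π)) :
    stoppedPosition α T = α T := by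
  rw [stoppedPosition]
  split_ifs with hne
  · refine congrArg α (min_eq_left (le_csInf hne fun t ht => ?_))
    by_contra! htT
    have hin := h ⟨ht.1, htT.le⟩
    rcases ht.2 with hzero | hpi
    · exact hin.1.ne' hzero
    · exact hin.2.ne hpi
  · rfl

end FloorHits

noncomputable def pendulumField (g : ℝ) (u : ℝ → ℝ) (t : ℝ) (x : ℝ × ℝ) : ℝ × ℝ :=
  (x.2, -g * cos x.1 + u t * sin x.1)

theorem lipschitzWith_pendulumField {g : ℝ} {u : ℝ → ℝ} {t : ℝ} {C : ℝ≥0} (hC : |u t| ≤ C) :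
    LipschitzWith (1 + ‖g‖₊ + C) (pendulumField g u t) := by
  refine LipschitzWith.of_dist_le_mul fun x y => ?_
  have h₁ : dist x.1 y.1 ≤ dist x y := le_max_left _ _
  have h₂ : dist x.2 y.2 ≤ dist x y := le_max_right _ _
  have hd : 0 ≤ dist x y := dist_nonneg
  generalize dist x y = d at h₁ h₂ hd ⊢
  have hcos := abs_cos_sub_cos_le x.1 y.1
  have hsin := abs_sin_sub_sin_le x.1 y.1
  rw [Real.dist_eq] at h₁
  simp only [pendulumField, Prod.dist_eq, Real.dist_eq, NNReal.coe_add, NNReal.coe_one, coe_nnnorm,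
    Real.norm_eq_abs] at h₂ ⊢
  refine max_le (by nlinarith [abs_nonneg g, C.2]) ?_
  calc |(-g * cos x.1 + u t * sin x.1) - (-g * cos y.1 + u t * sin y.1)|
      = |-g * (cos x.1 - cos y.1) + u t * (sin x.1 - sin y.1)| := by ring_nf
    _ ≤ |g| * |cos x.1 - cos y.1| + |u t| * |sin x.1 - sin y.1| := by
      refine (abs_add_le _ _).trans ?_
      rw [abs_mul, abs_mul, abs_neg]
    _ ≤ |g| * d + C * d := by
      gcongr
      · exact hcos.trans h₁
      · exact hsin.trans h₁
    _ ≤ (1 + |g| + C) * d := by nlinarith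

namespace IsPendulumSolution

variable {g : ℝ} {u : ℝ → ℝ} {α : ℝ → ℝ}

theorem differentiable (hα : IsPendulumSolution g u α) : Differentiable ℝ α :=
  hα.1.differentiable (by norm_num)

theorem continuous (hα : IsPendulumSolution g u α) : Continuous α :=
  hα.1.continuous

theorem hasDerivAt_deriv (hα : IsPendulumSolution g u α) (t : ℝ) :
    HasDerivAt (deriv α) (-g * cos (α t) + u t * sin (α t)) t :=
  hα.2 t ▸ ((hα.1.deriv' (n := 1)).differentiable one_ne_zero t).hasDerivAt

theorem hasDerivAt_state (hα : IsPendulumSolution g u α) (t : ℝ) :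
    HasDerivAt (fun s => (α s, deriv α s)) (pendulumField g u t (α t, deriv α t)) t :=
  (hα.differentiable t).hasDerivAt.prodMk (hα.hasDerivAt_deriv t)

theorem pi_sub (hα : IsPendulumSolution g u α) :
    IsPendulumSolution g (-u) (fun t => π - α t) := by
  refine ⟨contDiff_const.sub hα.1, fun t => ?_⟩
  have hderiv : deriv (fun s => π - α s) = fun s => -deriv α s := funext fun s => deriv_const_sub π
  rw [hderiv, deriv.fun_neg, hα.2 t, cos_pi_sub, sin_pi_sub, Pi.neg_apply]
  ring

theorem exists_dist_le_mul_dist_initial (hu : Continuous u) (b : ℝ) :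
    ∃ L : ℝ, ∀ {α β : ℝ → ℝ}, IsPendulumSolution g u α → IsPendulumSolution g u β →
      ∀ t ∈ Icc 0 b, dist (α t) (β t) ≤ L * dist (α 0, deriv α 0) (β 0, deriv β 0) := by
  obtain ⟨C, hC⟩ := (isCompact_Icc (a := 0) (b := b)).exists_bound_of_continuousOn hu.continuousOn
  set K : ℝ≥0 := 1 + ‖g‖₊ + C.toNNReal
  have hlip : ∀ t ∈ Ico 0 b, LipschitzOnWith K (pendulumField g u t) univ := fun t ht =>
    (lipschitzWith_pendulumField ((hC t (Ico_subset_Icc_self ht)).trans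
      (Real.le_coe_toNNReal C))).lipschitzOnWith
  refine ⟨exp (K * b), fun {α β} hα hβ t ht => ?_⟩
  have hgronwall := dist_le_of_trajectories_ODE_of_mem hlip
    (hα.continuous.prodMk (hα.1.continuous_deriv (by norm_num))).continuousOn
    (fun t _ => (hα.hasDerivAt_state t).hasDerivWithinAt) (fun _ _ => mem_univ _)
    (hβ.continuous.prodMk (hβ.1.continuous_deriv (by norm_num))).continuousOn
    (fun t _ => (hβ.hasDerivAt_state t).hasDerivWithinAt) (fun _ _ => mem_univ _) le_rfl t ht
  calc dist (α t) (β t) ≤ dist (α t, deriv α t) (β t, deriv β t) := le_max_left _ _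
    _ ≤ dist (α 0, deriv α 0) (β 0, deriv β 0) * exp (K * (t - 0)) := hgronwall
    _ ≤ exp (K * b) * dist (α 0, deriv α 0) (β 0, deriv β 0) := by
      rw [mul_comm, sub_zero]
      gcongr
      exact ht.2

theorem eventually_lt_zero_of_eq_zero {t₀ : ℝ} (hα : IsPendulumSolution g u α) (hg : 0 < g)
    (h0 : α t₀ = 0) (hd : deriv α t₀ ≤ 0) :
    ∀ᶠ t in 𝓝[>] t₀, α t < 0 := by
  have hdd : HasDerivAt (deriv α) (-g) t₀ := by simpa [h0] using hα.hasDerivAt_deriv t₀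
  obtain ⟨c, hc, hsub⟩ :=
    mem_nhdsGT_iff_exists_Ioo_subset.mp (hdd.eventually_nhdsGT_lt (neg_neg_of_pos hg))
  filter_upwards [Ioo_mem_nhdsGT hc] with t ht
  have hanti : StrictAntiOn α (Icc t₀ t) := by
    refine strictAntiOn_of_deriv_neg (convex_Icc _ _) hα.continuous.continuousOn fun s hs => ?_
    rw [interior_Icc] at hs
    exact (hsub ⟨hs.1, hs.2.trans ht.2⟩).trans_le hd
  simpa [h0] using hanti (left_mem_Icc.2 ht.1.le) (right_mem_Icc.2 ht.1.le) ht.1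

theorem eventually_lt_zero_of_first_zero {τ : ℝ} (hα : IsPendulumSolution g u α) (hg : 0 < g)
    (hd0 : deriv α 0 = 0) (hτ : 0 ≤ τ) (hpos : ∀ s ∈ Ico 0 τ, 0 < α s) (hzero : α τ = 0) :
    ∀ᶠ t in 𝓝[>] τ, α t < 0 := by
  refine hα.eventually_lt_zero_of_eq_zero hg hzero ?_
  rcases hτ.eq_or_lt with rfl | hτ
  · exact hd0.le
  · refine (hα.differentiable τ).hasDerivAt.nonpos_of_eventually_nhdsLT_le ?_
    filter_upwards [Ioo_mem_nhdsLT hτ] with s hs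
    exact hzero ▸ (hpos s ⟨hs.1.le, hs.2⟩).le

theorem eventually_notMem_Icc_firstHit (hα : IsPendulumSolution g u α) (hg : 0 < g)
    (h0 : α 0 ∈ Icc 0 π) (hd0 : deriv α 0 = 0) (hne : (floorHits α).Nonempty) :
    ∀ᶠ t in 𝓝[>] firstHit α, α t ∉ Icc 0 π := by
  have hτ := firstHit_mem hα.continuous hne
  have hinside : ∀ s ∈ Ico 0 (firstHit α), α s ∈ Ioo 0 π := fun s hs =>
    mapsTo_Ioo_of_lt_firstHit hα.continuous h0 hs.2 (right_mem_Icc.2 hs.1)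
  rcases hτ.2 with hzero | hpi
  · filter_upwards [hα.eventually_lt_zero_of_first_zero hg hd0 hτ.1
      (fun s hs => (hinside s hs).1) hzero] with t ht hmem
    exact ht.not_ge hmem.1
  · filter_upwards [hα.pi_sub.eventually_lt_zero_of_first_zero hg
      (by rw [deriv_const_sub, hd0, neg_zero]) hτ.1 (fun s hs => sub_pos.2 (hinside s hs).2)
      (sub_eq_zero.2 hpi.symm)] with t ht hmem
    exact (sub_neg.1 ht).not_ge hmem.2

end IsPendulumSolution

theorem tendstoUniformlyOn_of_isPendulumSolution {g : ℝ} {u : ℝ → ℝ} (hu : Continuous u)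
    {A : ℝ → ℝ → ℝ} (hA : ∀ φ, IsPendulumSolution g u (A φ) ∧ A φ 0 = φ ∧ deriv (A φ) 0 = 0)
    (φ₀ b : ℝ) : TendstoUniformlyOn A (A φ₀) (𝓝 φ₀) (Icc 0 b) := by
  obtain ⟨L, hL⟩ := IsPendulumSolution.exists_dist_le_mul_dist_initial (g := g) hu b
  have hdist : ∀ φ, ∀ t ∈ Icc 0 b, dist (A φ₀ t) (A φ t) ≤ L * dist φ₀ φ := fun φ t ht => by
    simpa [(hA φ₀).2.1, (hA φ₀).2.2, (hA φ).2.1, (hA φ).2.2, dist_prod_same_right] using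
      hL (hA φ₀).1 (hA φ).1 t ht
  rw [Metric.tendstoUniformlyOn_iff]
  intro ε hε
  filter_upwards [Metric.ball_mem_nhds φ₀ (show 0 < ε / (|L| + 1) by positivity)] with φ hφ t ht
  rw [Metric.mem_ball, dist_comm, lt_div_iff₀ (by positivity)] at hφ
  calc dist (A φ₀ t) (A φ t) ≤ L * dist φ₀ φ := hdist φ t ht
    _ ≤ dist φ₀ φ * (|L| + 1) := by nlinarith [le_abs_self L, dist_nonneg (x := φ₀) (y := φ)]
    _ < ε := hφ

section Continuity

variable {F : ℝ → ℝ → ℝ} {φ₀ T : ℝ}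

theorem continuousAt_stoppedPosition_of_mapsTo (hc : Continuous (F φ₀))
    (hunif : TendstoUniformlyOn F (F φ₀) (𝓝 φ₀) (Icc 0 T)) (hT : 0 ≤ T)
    (h : MapsTo (F φ₀) (Icc 0 T) (Ioo 0 π)) :
    ContinuousAt (fun φ => stoppedPosition (F φ) T) φ₀ := by
  have heq : (fun φ => F φ T) =ᶠ[𝓝 φ₀] fun φ => stoppedPosition (F φ) T :=
    (hunif.eventually_mapsTo isCompact_Icc hc.continuousOn isOpen_Ioo h).mono
      fun φ hφ => (stoppedPosition_of_mapsTo hφ).symm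
  rw [ContinuousAt, stoppedPosition_of_mapsTo h]
  exact (hunif.tendsto_at (right_mem_Icc.2 hT)).congr' heq

theorem continuousWithinAt_stoppedPosition_of_exit (hc : ∀ φ, Continuous (F φ))
    (hF0 : ∀ φ, F φ 0 = φ) (hunif : ∀ b, TendstoUniformlyOn F (F φ₀) (𝓝 φ₀) (Icc 0 b))
    (hφ₀ : φ₀ ∈ Icc 0 π) (hne : (floorHits (F φ₀)).Nonempty) (hτT : firstHit (F φ₀) ≤ T)
    (hexit : ∃ᶠ t in 𝓝[>] firstHit (F φ₀), F φ₀ t ∉ Icc 0 π) :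
    ContinuousWithinAt (fun φ => stoppedPosition (F φ) T) (Icc 0 π) φ₀ := by
  set τ₀ := firstHit (F φ₀)
  have hτ₀ : 0 ≤ τ₀ := (firstHit_mem (hc φ₀) hne).1
  rw [ContinuousWithinAt, stoppedPosition_of_nonempty hne, min_eq_right hτT, Metric.tendsto_nhds]
  intro ε hε
  obtain ⟨γ, hγ, hclose⟩ := Metric.continuousAt_iff.mp (hc φ₀).continuousAt (ε / 2) (half_pos hε)
  obtain ⟨tp, ⟨hτtp, htpγ⟩, hout⟩ : ∃ tp ∈ Ioo τ₀ (τ₀ + γ), F φ₀ tp ∉ Icc 0 π :=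
    (hexit.and_eventually (Ioo_mem_nhdsGT (by linarith))).exists.imp fun _ h => ⟨h.2, h.1⟩
  have hinside := mapsTo_Ioo_of_lt_firstHit (hc φ₀) (by rwa [hF0]) (sub_lt_self τ₀ hγ)
  have htp : tp ∈ Icc 0 tp := right_mem_Icc.2 (hτ₀.trans hτtp.le)
  filter_upwards [self_mem_nhdsWithin,
    nhdsWithin_le_nhds ((hunif (τ₀ - γ)).eventually_mapsTo isCompact_Icc (hc φ₀).continuousOn
      isOpen_Ioo hinside),
    nhdsWithin_le_nhds (((hunif tp).tendsto_at htp).eventually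
      (isClosed_Icc.isOpen_compl.mem_nhds hout)),
    nhdsWithin_le_nhds (Metric.tendstoUniformlyOn_iff.mp (hunif tp) _ (half_pos hε))]
    with ψ hψ hψinside hψout hψclose
  have hneψ : ∃ r ∈ Icc 0 tp, r ∈ floorHits (F ψ) := by
    by_contra! hnone
    exact hψout (Ioo_subset_Icc_self
      (mapsTo_Ioo_of_forall_notMem_floorHits (hc ψ) (by rwa [hF0]) hnone htp))
  obtain ⟨r, hr, hrhit⟩ := hneψ
  have hτψ := firstHit_mem (hc ψ) ⟨r, hrhit⟩
  have hlow : τ₀ - γ < firstHit (F ψ) := by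
    by_contra! hle
    have hin := hψinside ⟨hτψ.1, hle⟩
    rcases hτψ.2 with hzero | hpi
    · exact hin.1.ne' hzero
    · exact hin.2.ne hpi
  have hup : firstHit (F ψ) ≤ tp := (firstHit_le hrhit).trans hr.2
  set s := min T (firstHit (F ψ))
  have hs : s ∈ Icc 0 tp := ⟨le_min (hτ₀.trans hτT) hτψ.1, (min_le_right _ _).trans hup⟩
  have hsτ : dist s τ₀ < γ := by
    rw [Real.dist_eq, abs_lt]
    constructor
    · linarith [lt_min (by linarith : τ₀ - γ < T) hlow]
    · linarith [hs.2]
  rw [stoppedPosition_of_nonempty ⟨r, hrhit⟩]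
  calc dist (F ψ s) (F φ₀ τ₀) ≤ dist (F φ₀ s) (F ψ s) + dist (F φ₀ s) (F φ₀ τ₀) :=
        dist_triangle_left _ _ _
    _ < ε / 2 + ε / 2 := add_lt_add (hψclose s hs) (hclose hsτ)
    _ = ε := add_halves ε

end Continuity

open Classical in
/-- Continuity of the stopped (absorbing-floor) final-position map: if the
motion is stopped at the first time the rod becomes horizontal, the resulting
position at time `T` depends continuously on the initial angle `φ ∈ [0, π]`. -/
theorem pendulum_stopped_map_continuous (g : ℝ) (hg : 0 < g)
    (u : ℝ → ℝ) (hu : Continuous u) (A : ℝ → ℝ → ℝ)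
    (hA : ∀ φ : ℝ, IsPendulumSolution g u (A φ) ∧ A φ 0 = φ ∧ deriv (A φ) 0 = 0)
    (T : ℝ) (hT : 0 ≤ T) :
    ContinuousOn
      (fun φ : ℝ =>
        if ({t : ℝ | 0 ≤ t ∧ (A φ t = 0 ∨ A φ t = Real.pi)}).Nonempty then
          A φ (min T (sInf {t : ℝ | 0 ≤ t ∧ (A φ t = 0 ∨ A φ t = Real.pi)}))
        else A φ T)
      (Set.Icc (0 : ℝ) Real.pi) := by
  intro φ₀ hφ₀
  change ContinuousWithinAt (fun φ => stoppedPosition (A φ) T) _ φ₀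
  have hc : ∀ φ, Continuous (A φ) := fun φ => (hA φ).1.continuous
  have hunif := tendstoUniformlyOn_of_isPendulumSolution hu hA φ₀
  have h0 : A φ₀ 0 ∈ Icc 0 π := by rwa [(hA φ₀).2.1]
  by_cases hhit : (floorHits (A φ₀)).Nonempty ∧ firstHit (A φ₀) ≤ T
  · exact continuousWithinAt_stoppedPosition_of_exit hc (fun φ => (hA φ).2.1) hunif hφ₀ hhit.1
      hhit.2 ((hA φ₀).1.eventually_notMem_Icc_firstHit hg h0 (hA φ₀).2.2 hhit.1).frequently
  · refine (continuousAt_stoppedPosition_of_mapsTo (hc φ₀) (hunif T) hT ?_).continuousWithinAt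
    exact mapsTo_Ioo_of_forall_notMem_floorHits (hc φ₀) h0 fun t ht hmem =>
      hhit ⟨⟨t, hmem⟩, (firstHit_le hmem).trans ht.2⟩
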